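/- Let M be a finite matroid, let B be a free basis of M with B ≠ E(M), and let M′ be the matroid obtained from M by tightening B. Then for every e ∈ B, the deletions satisfy M′ \ e = M \ e. -/

import Mathlib

open Set

namespace Matroid

variable {α : Type}

/-- Deletion of a set from a matroid. -/
def delete' (M : Matroid α) (D : Set α) : Matroid α := M ↾ (M.E \ D)

/-- Contraction of a set in a matroid. -/
def contract' (M : Matroid α) (C : Set α) : Matroid α := (M✶.delete' C)✶

/-- A circuit: a minimal dependent set. -/
def IsCircuit' (M : Matroid α) (C : Set α) : Prop :=
  M.Dep C ∧ ∀ D, D ⊂ C → M.Indep D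

/-- A cocircuit: a circuit of the dual. -/
def IsCocircuit' (M : Matroid α) (C : Set α) : Prop := M✶.IsCircuit' C

/-- A hyperplane: a flat whose rank is one less than the rank of the matroid. -/
def IsHyperplane (M : Matroid α) (H : Set α) : Prop :=
  M.IsFlat H ∧ ∃ I B, M.IsBasis I H ∧ M.IsBase B ∧ I.encard + 1 = B.encard

/-- A circuit-hyperplane: a set that is both a circuit and a hyperplane. -/
def IsCircuitHyperplane (M : Matroid α) (C : Set α) : Prop :=
  M.IsCircuit' C ∧ M.IsHyperplane C

/-- A free basis: a basis `B` such that `B ∪ {e}` is a circuit for every `e ∈ E(M) - B`. -/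
def IsFreeBase (M : Matroid α) (B : Set α) : Prop :=
  M.IsBase B ∧ ∀ e ∈ M.E \ B, M.IsCircuit' (insert e B)

/-- A connected matroid: the ground set is nonempty and every two distinct elements of the
ground set lie in a common circuit. -/
def IsConnected (M : Matroid α) : Prop :=
  M.E.Nonempty ∧ ∀ x ∈ M.E, ∀ y ∈ M.E, x ≠ y → ∃ C, M.IsCircuit' C ∧ x ∈ C ∧ y ∈ C

/-- `M` is a frame matroid: there is a matroid `M'` whose ground set is the union of (a copy of)
`E(M)` and a set `V` disjoint from it, such that `V` is a basis of `M'`, deleting `V` from `M'`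
yields (the copy of) `M`, and for every `e ∈ E(M)` the unique circuit of `M'` contained in
`V ∪ {e}` has at most three elements. -/
def IsFrame (M : Matroid α) : Prop :=
  ∃ (β : Type) (M' : Matroid (α ⊕ β)) (V : Set (α ⊕ β)),
    M'.Finite ∧
    M'.E = (Sum.inl '' M.E) ∪ V ∧
    Disjoint (Sum.inl '' M.E) V ∧
    M'.IsBase V ∧
    M'.delete' V = M.map Sum.inl Sum.inl_injective.injOn ∧
    ∀ e ∈ M.E, ∃ C, M'.IsCircuit' C ∧ C ⊆ insert (Sum.inl e) V ∧ C.encard ≤ 3 ∧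
      ∀ C', M'.IsCircuit' C' → C' ⊆ insert (Sum.inl e) V → C' = C

/-- `N` is a graphic matroid: there are a set `W` of vertices and an assignment of an unordered
pair of vertices to each element of the ground set, such that a subset `I` of the ground set is
independent exactly when every nonempty `J ⊆ I` uses strictly more vertices than it has edges
(i.e. the associated multigraph is a forest). -/
def IsGraphic (N : Matroid α) : Prop :=
  ∃ (W : Type) (f : α → Sym2 W),
    ∀ I : Set α, N.Indep I ↔ (I ⊆ N.E ∧ ∀ J ⊆ I, J.Nonempty →
      J.encard < {w : W | ∃ e ∈ J, w ∈ f e}.encard)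

/-- `M` is a lifted-graphic matroid: there is a matroid `M'` whose ground set is (a copy of)
`E(M)` plus one extra element `f`, such that `M' \ f = M` and `M' / f` is graphic. -/
def IsLiftedGraphic (M : Matroid α) : Prop :=
  ∃ M' : Matroid (α ⊕ Unit),
    M'.Finite ∧
    M'.E = (Sum.inl '' M.E) ∪ {Sum.inr ()} ∧
    M'.delete' {Sum.inr ()} = M.map Sum.inl Sum.inl_injective.injOn ∧
    (M'.contract' {Sum.inr ()}).IsGraphic

/-- `M` and `N` are isomorphic matroids. -/
def Iso' {β : Type} (M : Matroid α) (N : Matroid β) : Prop :=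
  ∃ (f : α → β) (hf : Set.InjOn f M.E), M.map f hf = N

end Matroid

section Graphs

/-- The edges of the graph `G_k`: `a i`, `b i`, `c i`, `d i` for `i : Fin k`
(with `i` representing the index `i+1` of the paper), together with `e1` and `e2`. -/
inductive Edge (k : ℕ) : Type where
  | a : Fin k → Edge k
  | b : Fin k → Edge k
  | c : Fin k → Edge k
  | d : Fin k → Edge k
  | e1 : Edge k
  | e2 : Edge k
deriving DecidableEq

/-- The vertices of `G_k`: `Sum.inl (i, false)` is `x_{i+1}` (so `Sum.inl (0, false)` is `s_1`),
`Sum.inl (i, true)` is `y_{i+1}` (so `Sum.inl (0, true)` is `s_2`), `Sum.inr false` is `t_1` and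
`Sum.inr true` is `t_2`.  There are `2k+2` vertices in all. -/
abbrev Vertex (k : ℕ) := (Fin k × Bool) ⊕ Bool

variable {k : ℕ}

/-- The tail of each edge of `G_k`. -/
def Edge.tail [NeZero k] : Edge k → Vertex k
  | .a i => .inl (i, false)
  | .b i => .inl (i, false)
  | .c i => .inl (i, true)
  | .d i => .inl (i, true)
  | .e1 => .inl (0, false)
  | .e2 => .inl (0, true)

/-- The head of each edge of `G_k`; the head `x_1` is the vertex `t_1 = Sum.inr false` and
the head `y_1` is the vertex `t_2 = Sum.inr true`. -/
def Edge.head [NeZero k] : Edge k → Vertex k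
  | .a i => if i + 1 = 0 then .inr false else .inl (i + 1, false)
  | .b i => if i + 1 = 0 then .inr true else .inl (i + 1, true)
  | .c i => if i + 1 = 0 then .inr false else .inl (i + 1, false)
  | .d i => if i + 1 = 0 then .inr true else .inl (i + 1, true)
  | .e1 => .inr false
  | .e2 => .inr true

/-- The set `P = {a_1, …, a_k, d_1, …, d_k}`. -/
def Pset (k : ℕ) : Set (Edge k) := {e | ∃ i, e = .a i ∨ e = .d i}

/-- The set `Q = {b_1, …, b_k, c_1, …, c_k}`. -/
def Qset (k : ℕ) : Set (Edge k) := {e | ∃ i, e = .b i ∨ e = .c i}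

/-- The last index of `Fin k`, representing the paper's index `k`. -/
def lastIdx (k : ℕ) [NeZero k] : Fin k :=
  ⟨k - 1, Nat.sub_lt (Nat.pos_of_ne_zero (NeZero.ne k)) Nat.one_pos⟩

/-- The group labels for the frame construction: `γ(a_k) = γ(b_k) = γ(c_k) = γ(d_k) = 2` and
`γ(e) = 1` for every other edge. -/
def gammaF [NeZero k] : Edge k → ℝ
  | .a i => if i = lastIdx k then 2 else 1
  | .b i => if i = lastIdx k then 2 else 1
  | .c i => if i = lastIdx k then 2 else 1
  | .d i => if i = lastIdx k then 2 else 1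
  | .e1 => 1
  | .e2 => 1

/-- The matrix `A_k` of the frame construction, with rows indexed by the vertices of `G_k` and
columns by its edges: the column of an edge `e` has entry `1` in the row of the tail of `e`,
entry `-γ(e)` in the row of the head of `e`, and `0` elsewhere. -/
def frameMatrix (k : ℕ) [NeZero k] : Matrix (Vertex k) (Edge k) ℝ :=
  fun v e => if v = e.tail then 1 else if v = e.head then -gammaF e else 0

/-- The group labels for the lifted construction: `γ(a_i) = γ(d_i) = 1` for all `i` and
`γ(e) = 0` for every other edge. -/
def gammaL : Edge k → ℝ
  | .a _ => 1
  | .d _ => 1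
  | _ => 0

/-- The matrix `A_k^L` of the lifted construction, with rows indexed by the vertices of `G_k`
together with one additional row: the column of an edge `e` has entry `1` in the row of the tail
of `e`, entry `-1` in the row of the head of `e`, entry `γ(e)` in the additional row, and `0`
elsewhere. -/
def liftMatrix (k : ℕ) [NeZero k] : Matrix (Vertex k ⊕ Unit) (Edge k) ℝ :=
  fun v e => match v with
  | .inl v => if v = e.tail then 1 else if v = e.head then -1 else 0
  | .inr _ => gammaL e

/-- `N` is the matroid on the column index set of the matrix `A` in which a set is independent
if and only if the corresponding columns of `A` are linearly independent over `ℝ`. -/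
def IsColMatroid {m n : Type} (A : Matrix m n ℝ) (N : Matroid n) : Prop :=
  N.E = Set.univ ∧
  ∀ I : Set n, N.Indep I ↔ LinearIndependent ℝ (fun e : I => fun v : m => A v (e : n))

/-- The vertex of the contracted graph `G_k / {e_1, e_2}` corresponding to a vertex of `G_k`:
`t_1` is identified with `s_1` and `t_2` with `s_2`, leaving the `2k` vertices `Fin k × Bool`. -/
def contractVertex [NeZero k] : Vertex k → Fin k × Bool
  | .inl p => p
  | .inr b => (0, b)

/-- The tail, in `G_k / {e_1, e_2}`, of an edge. -/
def Edge.ctail [NeZero k] (e : Edge k) : Fin k × Bool := contractVertex e.tail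

/-- The head, in `G_k / {e_1, e_2}`, of an edge. -/
def Edge.chead [NeZero k] (e : Edge k) : Fin k × Bool := contractVertex e.head

/-- `v` is a vertex of the subgraph of `G_k / {e_1, e_2}` formed by the edge set `S`. -/
def Touches [NeZero k] (S : Set (Edge k)) (v : Fin k × Bool) : Prop :=
  ∃ e ∈ S, e.ctail = v ∨ e.chead = v

/-- The degree of the vertex `v` in the subgraph of `G_k / {e_1, e_2}` with edge set `S`. -/
noncomputable def degreeIn [NeZero k] (S : Set (Edge k)) (v : Fin k × Bool) : ℕ :=
  {e ∈ S | e.ctail = v}.ncard + {e ∈ S | e.chead = v}.ncard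

/-- The edge set `S` forms a cycle of the multigraph `G_k / {e_1, e_2}`: the subgraph it
spans is connected and `2`-regular. -/
def IsCycleIn [NeZero k] (S : Set (Edge k)) : Prop :=
  S.Nonempty ∧ Edge.e1 ∉ S ∧ Edge.e2 ∉ S ∧
  (∀ v, Touches S v → degreeIn S v = 2) ∧
  (∀ T ⊆ S, T.Nonempty → (S \ T).Nonempty → ∃ v, Touches T v ∧ Touches (S \ T) v)

/-- The star `δ_G(v)` of a vertex `v` of the contracted graph `G_k / {e_1, e_2}`:
all edges of that graph incident with `v`. -/
def contractStar (k : ℕ) [NeZero k] (v : Fin k × Bool) : Set (Edge k) :=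
  {e | e ≠ .e1 ∧ e ≠ .e2 ∧ (e.ctail = v ∨ e.chead = v)}

/-- The star `δ(v)` of a vertex `v` of the graph `G_k`: all edges of `G_k` incident with `v`. -/
def star (k : ℕ) [NeZero k] (v : Vertex k) : Set (Edge k) :=
  {e | e.tail = v ∨ e.head = v}

end Graphs

namespace Matroid

variable {α : Type} {M M' : Matroid α} {B D : Set α} {e f : α}

lemma IsFreeBase.isBase_insert_diff_singleton (hB : M.IsFreeBase B) (he : e ∈ B)
    (hf : f ∈ M.E \ B) : M.IsBase (insert f B \ {e}) :=
  hB.1.exchange_isBase_of_indep' he hf.2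
    ((hB.2 f hf).2 _ (sdiff_singleton_ssubset.2 (mem_insert_of_mem _ he)))

lemma IsFreeBase.exists_isBase_ne_of_ne_ground (hB : M.IsFreeBase B) (hBE : B ≠ M.E)
    (he : e ∈ B) : ∃ X, M.IsBase X ∧ X ≠ B ∧ B \ {e} ⊆ X := by
  obtain ⟨f, hf⟩ : (M.E \ B).Nonempty :=
    sdiff_nonempty.2 fun hEB ↦ hBE (hB.1.subset_ground.antisymm hEB)
  have hfe : f ≠ e := fun hfe ↦ hf.2 (hfe ▸ he)
  refine ⟨insert f B \ {e}, hB.isBase_insert_diff_singleton he hf, fun hX ↦ ?_,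
    sdiff_subset_sdiff_left (subset_insert f B)⟩
  exact hf.2 (hX ▸ ⟨mem_insert f B, hfe⟩)

/-- An independent set of `M \ D` that lies only in the removed base `B` lies in `B \ D`,
hence in another base. -/
lemma delete'_eq_of_isBase_iff_and_ne (hE : M'.E = M.E)
    (hB' : ∀ X, M'.IsBase X ↔ (M.IsBase X ∧ X ≠ B))
    (hD : ∃ X, M.IsBase X ∧ X ≠ B ∧ B \ D ⊆ X) : M'.delete' D = M.delete' D := by
  refine ext_indep (by simp [delete', hE]) fun I hI ↦ ?_
  have hID : Disjoint I D := (subset_sdiff.1 hI).2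
  simp only [delete', restrict_indep_iff, hE]
  simp only [indep_iff, hB']
  refine and_congr_left fun _ ↦ ⟨fun ⟨X, hX, hIX⟩ ↦ ⟨X, hX.1, hIX⟩, fun ⟨X, hX, hIX⟩ ↦ ?_⟩
  obtain rfl | hXB := eq_or_ne X B
  · obtain ⟨Y, hY, hYB, hBY⟩ := hD
    exact ⟨Y, ⟨hY, hYB⟩, (subset_sdiff.2 ⟨hIX, hID⟩).trans hBY⟩
  · exact ⟨X, ⟨hX, hXB⟩, hIX⟩

end Matroid

theorem tightening_delete_eq_general {α : Type} (M M' : Matroid α) (B : Set α)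
    (hB : M.IsFreeBase B) (hBne : B ≠ M.E)
    (hE : M'.E = M.E) (hB' : ∀ X : Set α, M'.IsBase X ↔ (M.IsBase X ∧ X ≠ B)) :
    ∀ e ∈ B, M'.delete' {e} = M.delete' {e} := fun _ he ↦
  Matroid.delete'_eq_of_isBase_iff_and_ne hE hB' (hB.exists_isBase_ne_of_ne_ground hBne he)

/-- If `M'` is obtained from a finite matroid `M` by tightening a free basis `B ≠ E(M)`,
then for every `e ∈ B` we have `M' \ e = M \ e`. -/
theorem tightening_delete_eq {α : Type} (M M' : Matroid α) [M.Finite] (B : Set α)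
    (hB : M.IsFreeBase B) (hBne : B ≠ M.E)
    (hE : M'.E = M.E) (hB' : ∀ X : Set α, M'.IsBase X ↔ (M.IsBase X ∧ X ≠ B)) :
    ∀ e ∈ B, M'.delete' {e} = M.delete' {e} :=
  tightening_delete_eq_general M M' B hB hBne hE hB'
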